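/- Let ε > 0 and λ > 0 with √λ > ε. Define r(z) = q_{λ,z}(r₂(z)) − q_{λ,z}(0), where q_{λ,z}(x) = (1/(2λ))(x − z)² + log(1 + |x|/ε) and r₂(z) = (z − ε)/2 + √((z + ε)²/4 − λ). Then r(2√λ − ε) > 0, r(λ/ε) < 0, and r has exactly one root z* in the open interval (2√λ − ε, λ/ε). -/

import Mathlib

open Real Filter

/-- The scalar log-sum penalty `g(w) = log(1 + |w|/ε)`. -/
noncomputable def logpen (ε : ℝ) (w : ℝ) : ℝ := Real.log (1 + |w| / ε)

/-- The objective `q_{λ,z}(x) = (1/(2λ))(x − z)² + g(x)`. -/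
noncomputable def qfun (lam ε z x : ℝ) : ℝ :=
  1 / (2 * lam) * (x - z) ^ 2 + logpen ε x

/-- The proximity operator of `λ g` at `z`: the set of global minimizers of `q_{λ,z}`. -/
def prox (lam ε z : ℝ) : Set ℝ := {x | ∀ y : ℝ, qfun lam ε z x ≤ qfun lam ε z y}

/-- `r₁(z) = (z − ε)/2 − √((z + ε)²/4 − λ)`. -/
noncomputable def r1 (lam ε z : ℝ) : ℝ :=
  (z - ε) / 2 - Real.sqrt ((z + ε) ^ 2 / 4 - lam)

/-- `r₂(z) = (z − ε)/2 + √((z + ε)²/4 − λ)`. -/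
noncomputable def r2 (lam ε z : ℝ) : ℝ :=
  (z - ε) / 2 + Real.sqrt ((z + ε) ^ 2 / 4 - lam)

/-- `r(z) = q_{λ,z}(r₂(z)) − q_{λ,z}(0)`. -/
noncomputable def rfun (lam ε z : ℝ) : ℝ :=
  qfun lam ε z (r2 lam ε z) - qfun lam ε z 0

/-- The iteratively reweighted ℓ₁ iteration for `prox_{λ g}(z)`. -/
def IterRW (lam ε z : ℝ) (x : ℕ → ℝ) : Prop :=
  ∀ k : ℕ, x (k + 1) =
    if |z| ≤ lam / (ε + |x k|) then 0
    else Real.sign z * (|z| - lam / (ε + |x k|))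

/-! For `z ≥ 2√λ − ε` the derivative of `q_{λ,z}` on `x > 0` has the sign of
`(x − r₁(z))(x − r₂(z))`, so `r₂(z)` minimizes `q_{λ,z}` on `[√λ − ε, ∞)`, an interval that
contains `r₂(z')` for every such `z'`. As `q_{λ,z}(x) − q_{λ,z}(0)` is affine in `z` with slope
`−x/λ`, comparing with `x = r₂(z₁)` shows that `r` is strictly decreasing there. With
`t = ε/√λ < 1` and `s = λ/ε² > 1` the two endpoint signs are the elementary inequalities
`log t < (t − 1) − (t − 1)²/2` and `log s < (s − s⁻¹)/2`, and the intermediate value theorem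
gives the root. -/

open Set Topology

lemma log_lt_sub_one_sub_sq_div_two {t : ℝ} (ht₀ : 0 < t) (ht₁ : t < 1) :
    log t < (t - 1) - (t - 1) ^ 2 / 2 := by
  let φ : ℝ → ℝ := fun x => (x - 1) - (x - 1) ^ 2 / 2 - log x
  have hφ' : ∀ x, 0 < x → HasDerivAt φ (-(x - 1) ^ 2 / x) x := fun x hx => by
    refine ((((hasDerivAt_id' x).sub_const 1).sub
      ((((hasDerivAt_id' x).sub_const 1).pow 2).div_const 2)).sub
        (hasDerivAt_log hx.ne')).congr_deriv ?_
    field_simp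
    ring
  have hanti : StrictAntiOn φ (Ioc 0 1) := by
    refine strictAntiOn_of_hasDerivWithinAt_neg (convex_Ioc 0 1)
      (fun x hx => (hφ' x hx.1).continuousAt.continuousWithinAt)
      (fun x hx => (hφ' x (interior_subset hx).1).hasDerivWithinAt) fun x hx => ?_
    rw [interior_Ioc] at hx
    have : 0 < (x - 1) ^ 2 := by nlinarith [hx.2]
    exact div_neg_of_neg_of_pos (by linarith) hx.1
  have := hanti ⟨ht₀, ht₁.le⟩ ⟨one_pos, le_rfl⟩ ht₁
  simp only [φ, sub_self, log_one] at this
  linarith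

lemma log_lt_sub_inv_div_two {s : ℝ} (hs : 1 < s) : log s < (s - s⁻¹) / 2 := by
  let φ : ℝ → ℝ := fun x => (x - x⁻¹) / 2 - log x
  have hφ' : ∀ x, 0 < x → HasDerivAt φ ((x - 1) ^ 2 / (2 * x ^ 2)) x := fun x hx => by
    refine ((((hasDerivAt_id' x).sub (hasDerivAt_inv hx.ne')).div_const 2).sub
      (hasDerivAt_log hx.ne')).congr_deriv ?_
    field_simp
    ring
  have hmono : StrictMonoOn φ (Ici 1) := by
    refine strictMonoOn_of_hasDerivWithinAt_pos (convex_Ici 1)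
      (fun x hx => (hφ' x (one_pos.trans_le hx)).continuousAt.continuousWithinAt)
      (fun x hx => (hφ' x (one_pos.trans_le (interior_subset hx))).hasDerivWithinAt)
      fun x hx => ?_
    rw [interior_Ici, mem_Ioi] at hx
    have : 0 < (x - 1) ^ 2 := by nlinarith
    exact div_pos this (by positivity)
  have := hmono self_mem_Ici hs.le hs
  simp only [φ, inv_one, sub_self, log_one, zero_div] at this
  linarith

section

variable {lam ε z x : ℝ}

lemma continuous_qfun (hε : 0 < ε) : Continuous (qfun lam ε z) := by
  unfold qfun logpen
  fun_prop (disch := intro; positivity)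

lemma hasDerivAt_qfun (hε : 0 < ε) (hlam : lam ≠ 0) (hx : 0 < x) :
    HasDerivAt (qfun lam ε z) (((x - z) * (ε + x) + lam) / (lam * (ε + x))) x := by
  have hq : qfun lam ε z =ᶠ[𝓝 x] fun y => 1 / (2 * lam) * (y - z) ^ 2 + log (1 + y / ε) := by
    filter_upwards [lt_mem_nhds hx] with y hy
    rw [qfun, logpen, abs_of_pos hy]
  refine HasDerivAt.congr_of_eventuallyEq ?_ hq
  refine (((((hasDerivAt_id' x).sub_const z).pow 2).const_mul (1 / (2 * lam))).add
    ((((hasDerivAt_id' x).div_const ε).const_add 1).log (by positivity))).congr_deriv ?_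
  field_simp
  ring

lemma sub_r1_mul_sub_r2 (hD : 0 ≤ (z + ε) ^ 2 / 4 - lam) :
    (x - r1 lam ε z) * (x - r2 lam ε z) = (x - z) * (ε + x) + lam := by
  simp only [r1, r2]
  linear_combination -Real.sq_sqrt hD

lemma qfun_sub_qfun_zero (lam ε z z' x : ℝ) :
    qfun lam ε z' x - qfun lam ε z' 0 =
      qfun lam ε z x - qfun lam ε z 0 - x * (z' - z) / lam := by
  simp only [qfun]
  ring

lemma qfun_r2_le (hε : 0 < ε) (hlam : 0 < lam) (hD : 0 ≤ (z + ε) ^ 2 / 4 - lam)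
    (hr2 : 0 ≤ r2 lam ε z) (hx : 0 ≤ x) (hr1x : r1 lam ε z ≤ x) :
    qfun lam ε z (r2 lam ε z) ≤ qfun lam ε z x := by
  have hq' : ∀ y, 0 < y → HasDerivAt (qfun lam ε z)
      ((y - r1 lam ε z) * (y - r2 lam ε z) / (lam * (ε + y))) y := fun y hy => by
    rw [sub_r1_mul_sub_r2 hD]
    exact hasDerivAt_qfun hε hlam.ne' hy
  have hcont : ∀ s, ContinuousOn (qfun lam ε z) s := fun _ => (continuous_qfun hε).continuousOn
  have hderivOn : ∀ a b, 0 ≤ a → ∀ y ∈ interior (Icc a b),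
      HasDerivWithinAt (qfun lam ε z)
        ((y - r1 lam ε z) * (y - r2 lam ε z) / (lam * (ε + y))) (interior (Icc a b)) y :=
    fun a b ha y hy => by
      rw [interior_Icc] at hy
      exact (hq' y (ha.trans_lt hy.1)).hasDerivWithinAt
  have hr12 : r1 lam ε z ≤ r2 lam ε z := by
    simp only [r1, r2]
    linarith [Real.sqrt_nonneg ((z + ε) ^ 2 / 4 - lam)]
  rcases le_total x (r2 lam ε z) with hxr | hxr
  · refine antitoneOn_of_hasDerivWithinAt_nonpos (convex_Icc _ _) (hcont _) (hderivOn _ _ hx)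
      (fun y hy => ?_) ⟨le_rfl, hxr⟩ ⟨hxr, le_rfl⟩ hxr
    rw [interior_Icc] at hy
    exact div_nonpos_of_nonpos_of_nonneg
      (mul_nonpos_of_nonneg_of_nonpos (by linarith [hy.1]) (by linarith [hy.2]))
      (mul_nonneg hlam.le (by linarith [hy.1]))
  · refine monotoneOn_of_hasDerivWithinAt_nonneg (convex_Icc _ _) (hcont _) (hderivOn _ _ hr2)
      (fun y hy => ?_) ⟨le_rfl, hxr⟩ ⟨hxr, le_rfl⟩ hxr
    rw [interior_Icc] at hy
    exact div_nonneg (mul_nonneg (by linarith [hy.1]) (by linarith [hy.1]))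
      (mul_nonneg hlam.le (by linarith [hy.1]))

lemma discr_nonneg (hlam : 0 ≤ lam) (hz : 2 * √lam - ε ≤ z) :
    0 ≤ (z + ε) ^ 2 / 4 - lam := by
  have h2 : (2 * √lam) ^ 2 ≤ (z + ε) ^ 2 := pow_le_pow_left₀ (by positivity) (by linarith) 2
  nlinarith [Real.sq_sqrt hlam]

lemma r1_le_sqrt_sub (hlam : 0 ≤ lam) (hz : 2 * √lam - ε ≤ z) :
    r1 lam ε z ≤ √lam - ε := by
  have key : (z + ε) / 2 - √lam ≤ √((z + ε) ^ 2 / 4 - lam) := by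
    refine (le_abs_self _).trans (Real.abs_le_sqrt ?_)
    nlinarith [Real.sq_sqrt hlam, mul_le_mul_of_nonneg_left hz (Real.sqrt_nonneg lam)]
  rw [r1]
  linarith

lemma sqrt_sub_le_r2 (hz : 2 * √lam - ε ≤ z) : √lam - ε ≤ r2 lam ε z := by
  have := Real.sqrt_nonneg ((z + ε) ^ 2 / 4 - lam)
  rw [r2]
  linarith

lemma qfun_r2_le_of_sqrt_sub_le (hε : 0 < ε) (h : ε < √lam) (hz : 2 * √lam - ε ≤ z)
    (hx : √lam - ε ≤ x) : qfun lam ε z (r2 lam ε z) ≤ qfun lam ε z x := by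
  have hlam : 0 < lam := Real.sqrt_pos.1 (hε.trans h)
  exact qfun_r2_le hε hlam (discr_nonneg hlam.le hz) (by linarith [sqrt_sub_le_r2 hz])
    (by linarith) ((r1_le_sqrt_sub hlam.le hz).trans hx)

lemma rfun_strictAntiOn (hε : 0 < ε) (h : ε < √lam) :
    StrictAntiOn (rfun lam ε) (Ici (2 * √lam - ε)) := by
  intro z₁ hz₁ z₂ hz₂ hlt
  have hlam : 0 < lam := Real.sqrt_pos.1 (hε.trans h)
  have hr2 : 0 < r2 lam ε z₁ := by linarith [sqrt_sub_le_r2 hz₁]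
  calc rfun lam ε z₂
      ≤ qfun lam ε z₂ (r2 lam ε z₁) - qfun lam ε z₂ 0 :=
        sub_le_sub_right (qfun_r2_le_of_sqrt_sub_le hε h hz₂ (sqrt_sub_le_r2 hz₁)) _
    _ = rfun lam ε z₁ - r2 lam ε z₁ * (z₂ - z₁) / lam := qfun_sub_qfun_zero _ _ _ _ _
    _ < rfun lam ε z₁ := sub_lt_self _ (div_pos (mul_pos hr2 (sub_pos.2 hlt)) hlam)

lemma r2_two_sqrt_sub (hlam : 0 ≤ lam) : r2 lam ε (2 * √lam - ε) = √lam - ε := by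
  have hD : (2 * √lam - ε + ε) ^ 2 / 4 - lam = 0 := by
    linear_combination Real.sq_sqrt hlam
  rw [r2, hD, Real.sqrt_zero]
  ring

lemma rfun_two_sqrt_sub_pos (hε : 0 < ε) (h : ε < √lam) :
    0 < rfun lam ε (2 * √lam - ε) := by
  obtain ⟨L, hL0, rfl⟩ : ∃ L, 0 < L ∧ lam = L ^ 2 :=
    ⟨√lam, hε.trans h, (Real.sq_sqrt (Real.sqrt_pos.1 (hε.trans h)).le).symm⟩
  rw [Real.sqrt_sq hL0.le] at h
  have hrt : rfun (L ^ 2) ε (2 * L - ε) = (ε / L - 1) - (ε / L - 1) ^ 2 / 2 - log (ε / L) := by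
    have hlog : 1 + |L - ε| / ε = (ε / L)⁻¹ := by
      rw [abs_of_pos (sub_pos.2 h)]
      field_simp
      ring
    have hr2 := r2_two_sqrt_sub (ε := ε) (sq_nonneg L)
    rw [Real.sqrt_sq hL0.le] at hr2
    rw [rfun, hr2, qfun, qfun, logpen, logpen, hlog, log_inv, abs_zero, zero_div, add_zero, log_one]
    field_simp
    ring
  rw [Real.sqrt_sq hL0.le, hrt, sub_pos]
  exact log_lt_sub_one_sub_sq_div_two (by positivity) ((div_lt_one hL0).2 h)

lemma two_sqrt_sub_lt_div (hε : 0 < ε) (h : ε < √lam) : 2 * √lam - ε < lam / ε := by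
  have hlam : 0 ≤ lam := (Real.sqrt_pos.1 (hε.trans h)).le
  rw [lt_div_iff₀ hε]
  nlinarith [Real.sq_sqrt hlam, sq_pos_of_pos (sub_pos.2 h)]

lemma rfun_div_neg (hε : 0 < ε) (h : ε < √lam) : rfun lam ε (lam / ε) < 0 := by
  have hlam : 0 < lam := Real.sqrt_pos.1 (hε.trans h)
  have hz := two_sqrt_sub_lt_div hε h
  have hs : 1 < lam / ε ^ 2 := by
    rw [lt_div_iff₀ (by positivity), one_mul, ← Real.sq_sqrt hlam.le]
    exact pow_lt_pow_left₀ h hε.le two_ne_zero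
  have hx : √lam - ε ≤ lam / ε - ε := by
    have : √lam ≤ lam / ε := by nlinarith
    linarith
  have hq : qfun lam ε (lam / ε) (lam / ε - ε) - qfun lam ε (lam / ε) 0
      = log (lam / ε ^ 2) - (lam / ε ^ 2 - (lam / ε ^ 2)⁻¹) / 2 := by
    have hlog : 1 + |lam / ε - ε| / ε = lam / ε ^ 2 := by
      rw [abs_of_pos (by linarith [Real.sqrt_pos.2 hlam])]
      field_simp
      ring
    rw [qfun, qfun, logpen, logpen, hlog, abs_zero, zero_div, add_zero, log_one]
    field_simp
    ring
  calc rfun lam ε (lam / ε)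
      ≤ qfun lam ε (lam / ε) (lam / ε - ε) - qfun lam ε (lam / ε) 0 :=
        sub_le_sub_right (qfun_r2_le_of_sqrt_sub_le hε h hz.le hx) _
    _ < 0 := by rw [hq, sub_neg]; exact log_lt_sub_inv_div_two hs

lemma continuous_rfun (hε : 0 < ε) : Continuous (rfun lam ε) := by
  unfold rfun qfun logpen r2
  fun_prop (disch := intro; positivity)

end

theorem rfun_unique_root_general (ε lam : ℝ) (hε : 0 < ε)
    (h : ε < Real.sqrt lam) :
    0 < rfun lam ε (2 * Real.sqrt lam - ε) ∧
    rfun lam ε (lam / ε) < 0 ∧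
    (∃! zs : ℝ, zs ∈ Set.Ioo (2 * Real.sqrt lam - ε) (lam / ε) ∧
      rfun lam ε zs = 0) := by
  have hpos := rfun_two_sqrt_sub_pos hε h
  have hneg := rfun_div_neg hε h
  obtain ⟨zs, hzs, hroot⟩ := intermediate_value_Ioo' (two_sqrt_sub_lt_div hε h).le
    (continuous_rfun hε).continuousOn ⟨hneg, hpos⟩
  refine ⟨hpos, hneg, zs, ⟨hzs, hroot⟩, fun y ⟨hy, hy0⟩ => ?_⟩
  exact (rfun_strictAntiOn hε h).injOn hy.1.le hzs.1.le (hy0.trans hroot.symm)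

/-- sign changes and the unique root `z*` of `r` when `√λ > ε`. -/
theorem rfun_unique_root (ε lam : ℝ) (hε : 0 < ε) (hlam : 0 < lam)
    (h : ε < Real.sqrt lam) :
    0 < rfun lam ε (2 * Real.sqrt lam - ε) ∧
    rfun lam ε (lam / ε) < 0 ∧
    (∃! zs : ℝ, zs ∈ Set.Ioo (2 * Real.sqrt lam - ε) (lam / ε) ∧
      rfun lam ε zs = 0) :=
  rfun_unique_root_general ε lam hε h
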